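/- Suppose an n×N matrix Φ with unit columns has RIP parameter of order m equal to ε (i.e., ε is the least parameter for which the RIP of order m holds). Then for any δ ∈ (0,1) and any k with m ≤ k ≤ 1 + (m-1)δ/ε, Φ satisfies the RIP of order k with parameter δ. -/

import Mathlib

open Finset

/-- `Φ` satisfies the Restricted Isometry Property of order `k` with parameter `δ`. -/
def RIP {m N : Type*} [Fintype m] [Fintype N] [DecidableEq N]
    (Φ : Matrix m N ℂ) (k : ℕ) (δ : ℝ) : Prop :=
  ∀ x : N → ℂ, (Finset.univ.filter fun i => x i ≠ 0).card ≤ k →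
    (1 - δ) * ∑ i, ‖x i‖ ^ 2 ≤ ∑ a, ‖Φ.mulVec x a‖ ^ 2 ∧
      ∑ a, ‖Φ.mulVec x a‖ ^ 2 ≤ (1 + δ) * ∑ i, ‖x i‖ ^ 2

/-!
With unit columns the diagonal of the Gram matrix `Φᴴ * Φ` is `1`, so for `x` supported on `T`
the defect `‖Φ x‖² - ‖x‖²` is the off-diagonal part `gramOffDiag Φ x T` of the Gram form, and the
RIP of order `k` with parameter `δ` says exactly that `|gramOffDiag Φ x T| ≤ δ ‖x‖²` whenever
`#T ≤ k`. For a support `S` with `#S = s ≥ m ≥ 2`, sum the order-`m` bound over all `m`-subsets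
of `S`: each off-diagonal pair is counted `C(s-2, m-2)` times and each term `‖x i‖²`
`C(s-1, m-1)` times, so `|gramOffDiag Φ x S| ≤ ε (s-1)/(m-1) ‖x‖² ≤ ε (k-1)/(m-1) ‖x‖² ≤ δ ‖x‖²`.
-/

open Matrix

lemma sum_powersetCard_sum_filter_subset {α β M : Type*} [DecidableEq α] [AddCommMonoid M]
    {S : Finset α} {A : Finset β} {e : β → Finset α} {r : ℕ}
    (he : ∀ a ∈ A, e a ⊆ S ∧ #(e a) = r) {m : ℕ} (hrm : r ≤ m) (f : β → M) :
    ∑ T ∈ S.powersetCard m, ∑ a ∈ A with e a ⊆ T, f a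
      = (#S - r).choose (m - r) • ∑ a ∈ A, f a := by
  simp_rw [sum_filter]
  rw [sum_comm, smul_sum]
  refine sum_congr rfl fun a ha => ?_
  obtain ⟨haS, har⟩ := he a ha
  rw [← sum_filter, sum_const, card_filter_powersetCard_subset _ _ _ haS (har ▸ hrm), har]

lemma sum_powersetCard_sum {α M : Type*} [DecidableEq α] [AddCommMonoid M] (S : Finset α)
    {m : ℕ} (hm : 1 ≤ m) (f : α → M) :
    ∑ T ∈ S.powersetCard m, ∑ i ∈ T, f i = (#S - 1).choose (m - 1) • ∑ i ∈ S, f i := by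
  rw [← sum_powersetCard_sum_filter_subset (e := fun i => {i})
    (fun i hi => ⟨singleton_subset_iff.2 hi, card_singleton i⟩) hm]
  refine sum_congr rfl fun T hT => sum_congr ?_ fun _ _ => rfl
  ext i
  simpa using fun h => (mem_powersetCard.1 hT).1 h

lemma sum_powersetCard_sum_offDiag {α M : Type*} [DecidableEq α] [AddCommMonoid M]
    (S : Finset α) {m : ℕ} (hm : 2 ≤ m) (f : α × α → M) :
    ∑ T ∈ S.powersetCard m, ∑ p ∈ T.offDiag, f p
      = (#S - 2).choose (m - 2) • ∑ p ∈ S.offDiag, f p := by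
  rw [← sum_powersetCard_sum_filter_subset (e := fun p => {p.1, p.2})
    (fun p hp => ?_) hm]
  · refine sum_congr rfl fun T hT => sum_congr ?_ fun _ _ => rfl
    ext p
    simp only [mem_offDiag, mem_filter, insert_subset_iff, singleton_subset_iff]
    have := (mem_powersetCard.1 hT).1
    grind
  · obtain ⟨h1, h2, h12⟩ := mem_offDiag.1 hp
    exact ⟨by simp [insert_subset_iff, h1, h2], card_pair h12⟩

variable {ι κ : Type*} [Fintype ι]

lemma conjTranspose_mul_self_apply_self (Φ : Matrix ι κ ℂ) (j : κ) :
    (Φᴴ * Φ) j j = ((∑ a, ‖Φ a j‖ ^ 2 : ℝ) : ℂ) := by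
  simp [mul_apply, Complex.conj_mul']

variable [Fintype κ]

lemma sum_norm_sq_mulVec (Φ : Matrix ι κ ℂ) (y : κ → ℂ) :
    ∑ a, ‖(Φ *ᵥ y) a‖ ^ 2 = (star y ⬝ᵥ (Φᴴ * Φ) *ᵥ y).re := by
  rw [← mulVec_mulVec, dotProduct_mulVec, ← star_mulVec, dotProduct, Complex.re_sum]
  refine sum_congr rfl fun a _ => ?_
  rw [Pi.star_apply, Complex.star_def, Complex.conj_mul', ← Complex.ofReal_pow, Complex.ofReal_re]

variable [DecidableEq κ]

def gramOffDiag (Φ : Matrix ι κ ℂ) (x : κ → ℂ) (T : Finset κ) : ℝ :=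
  ∑ p ∈ T.offDiag, (star (x p.1) * (Φᴴ * Φ) p.1 p.2 * x p.2).re

lemma star_dotProduct_mulVec_indicator (G : Matrix κ κ ℂ) (x : κ → ℂ) (T : Finset κ) :
    star ((T : Set κ).indicator x) ⬝ᵥ G *ᵥ (T : Set κ).indicator x
      = ∑ p ∈ T ×ˢ T, star (x p.1) * G p.1 p.2 * x p.2 := by
  simp [dotProduct, mulVec, Set.indicator_apply, sum_product, mul_sum, mul_assoc, apply_ite,
    ite_mul, sum_ite_mem]

lemma sum_norm_sq_mulVec_indicator {Φ : Matrix ι κ ℂ} (hunit : ∀ j, ∑ a, ‖Φ a j‖ ^ 2 = 1)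
    (x : κ → ℂ) (T : Finset κ) :
    ∑ a, ‖(Φ *ᵥ (T : Set κ).indicator x) a‖ ^ 2 = ∑ i ∈ T, ‖x i‖ ^ 2 + gramOffDiag Φ x T := by
  have hdiag : ∀ i, (star (x i) * (Φᴴ * Φ) i i * x i).re = ‖x i‖ ^ 2 := by
    intro i
    rw [conjTranspose_mul_self_apply_self, hunit, Complex.ofReal_one, mul_one, Complex.star_def,
      Complex.conj_mul', ← Complex.ofReal_pow, Complex.ofReal_re]
  rw [sum_norm_sq_mulVec, star_dotProduct_mulVec_indicator, ← diag_union_offDiag,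
    sum_union (disjoint_diag_offDiag _), sum_diag, Complex.add_re, Complex.re_sum, Complex.re_sum]
  simp only [hdiag, gramOffDiag]

lemma rip_iff_abs_gramOffDiag_le {Φ : Matrix ι κ ℂ} (hunit : ∀ j, ∑ a, ‖Φ a j‖ ^ 2 = 1)
    {k : ℕ} {δ : ℝ} :
    RIP Φ k δ ↔ ∀ (x : κ → ℂ) (T : Finset κ), #T ≤ k →
      |gramOffDiag Φ x T| ≤ δ * ∑ i ∈ T, ‖x i‖ ^ 2 := by
  have hnorm (x : κ → ℂ) (T : Finset κ) :
      ∑ i, ‖(T : Set κ).indicator x i‖ ^ 2 = ∑ i ∈ T, ‖x i‖ ^ 2 := by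
    simp [Set.indicator_apply, apply_ite, sum_ite_mem]
  have hrip_at (x : κ → ℂ) (T : Finset κ) :
      let y := (T : Set κ).indicator x
      ((1 - δ) * ∑ i, ‖y i‖ ^ 2 ≤ ∑ a, ‖(Φ *ᵥ y) a‖ ^ 2 ∧
        ∑ a, ‖(Φ *ᵥ y) a‖ ^ 2 ≤ (1 + δ) * ∑ i, ‖y i‖ ^ 2) ↔
        |gramOffDiag Φ x T| ≤ δ * ∑ i ∈ T, ‖x i‖ ^ 2 := by
    intro y
    rw [hnorm, sum_norm_sq_mulVec_indicator hunit, abs_le]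
    constructor <;> rintro ⟨h₁, h₂⟩ <;> constructor <;> linarith
  constructor
  · intro h x T hT
    exact (hrip_at x T).1 (h _ ((card_le_card fun i hi =>
      Set.mem_of_indicator_ne_zero (mem_filter.1 hi).2).trans hT))
  · intro h x hx
    set S := univ.filter fun i => x i ≠ 0
    have hxS : (S : Set κ).indicator x = x :=
      Set.indicator_eq_self.2 fun i hi => by simpa [S] using hi
    simpa only [hxS] using (hrip_at x S).2 (h x S hx)

lemma sub_one_mul_abs_gramOffDiag_le {Φ : Matrix ι κ ℂ} (hunit : ∀ j, ∑ a, ‖Φ a j‖ ^ 2 = 1)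
    {m : ℕ} {ε : ℝ} (hrip : RIP Φ m ε) (hm : 2 ≤ m) (x : κ → ℂ) {S : Finset κ} (hS : m ≤ #S) :
    ((m : ℝ) - 1) * |gramOffDiag Φ x S| ≤ ε * ((#S : ℝ) - 1) * ∑ i ∈ S, ‖x i‖ ^ 2 := by
  set c₂ : ℝ := ↑((#S - 2).choose (m - 2))
  set c₁ : ℝ := ↑((#S - 1).choose (m - 1))
  have hc₂ : 0 < c₂ := by simpa [c₂] using Nat.choose_pos (by omega : m - 2 ≤ #S - 2)
  have hpascal : ((#S : ℝ) - 1) * c₂ = c₁ * ((m : ℝ) - 1) := by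
    have h := Nat.add_one_mul_choose_eq (#S - 2) (m - 2)
    rw [show #S - 2 + 1 = #S - 1 by omega, show m - 2 + 1 = m - 1 by omega] at h
    have h' := congrArg (Nat.cast : ℕ → ℝ) h
    push_cast [Nat.cast_sub (by omega : 1 ≤ #S), Nat.cast_sub (by omega : 1 ≤ m)] at h'
    exact h'
  have haverage : c₂ * |gramOffDiag Φ x S| ≤ ε * c₁ * ∑ i ∈ S, ‖x i‖ ^ 2 := by
    have hbound := (rip_iff_abs_gramOffDiag_le hunit).1 hrip x
    calc c₂ * |gramOffDiag Φ x S|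
        = |∑ T ∈ S.powersetCard m, gramOffDiag Φ x T| := by
          simp only [gramOffDiag]
          rw [sum_powersetCard_sum_offDiag S hm, nsmul_eq_mul, abs_mul, Nat.abs_cast]
      _ ≤ ∑ T ∈ S.powersetCard m, ε * ∑ i ∈ T, ‖x i‖ ^ 2 :=
          (abs_sum_le_sum_abs _ _).trans <| sum_le_sum fun T hT =>
            hbound T (mem_powersetCard.1 hT).2.le
      _ = ε * c₁ * ∑ i ∈ S, ‖x i‖ ^ 2 := by
          rw [← mul_sum, sum_powersetCard_sum S (by omega), nsmul_eq_mul, mul_assoc]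
  have hm₁ : (0 : ℝ) ≤ (m : ℝ) - 1 := by
    have : (2 : ℝ) ≤ m := by exact_mod_cast hm
    linarith
  refine le_of_mul_le_mul_left ?_ hc₂
  calc c₂ * (((m : ℝ) - 1) * |gramOffDiag Φ x S|)
      = ((m : ℝ) - 1) * (c₂ * |gramOffDiag Φ x S|) := by ring
    _ ≤ ((m : ℝ) - 1) * (ε * c₁ * ∑ i ∈ S, ‖x i‖ ^ 2) := mul_le_mul_of_nonneg_left haverage hm₁
    _ = c₂ * (ε * ((#S : ℝ) - 1) * ∑ i ∈ S, ‖x i‖ ^ 2) := by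
      linear_combination (-(ε * ∑ i ∈ S, ‖x i‖ ^ 2)) * hpascal

theorem rip_of_rip_of_two_le {Φ : Matrix ι κ ℂ} (hunit : ∀ j, ∑ a, ‖Φ a j‖ ^ 2 = 1)
    {m k : ℕ} {ε δ : ℝ} (hrip : RIP Φ m ε) (hm : 2 ≤ m) (hmk : m ≤ k) (hε : 0 ≤ ε)
    (hεδ : ε * ((k : ℝ) - 1) ≤ δ * ((m : ℝ) - 1)) : RIP Φ k δ := by
  have hm₁ : (0 : ℝ) < (m : ℝ) - 1 := by
    have : (2 : ℝ) ≤ m := by exact_mod_cast hm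
    linarith
  have hmkR : (m : ℝ) ≤ k := by exact_mod_cast hmk
  rw [rip_iff_abs_gramOffDiag_le hunit]
  intro x S hS
  have hx : 0 ≤ ∑ i ∈ S, ‖x i‖ ^ 2 := by positivity
  rcases le_or_gt #S m with hSm | hmS
  · have hle : ε ≤ δ := le_of_mul_le_mul_right
      ((mul_le_mul_of_nonneg_left (sub_le_sub_right hmkR 1) hε).trans hεδ) hm₁
    calc |gramOffDiag Φ x S| ≤ ε * ∑ i ∈ S, ‖x i‖ ^ 2 :=
          (rip_iff_abs_gramOffDiag_le hunit).1 hrip x S hSm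
      _ ≤ δ * ∑ i ∈ S, ‖x i‖ ^ 2 := mul_le_mul_of_nonneg_right hle hx
  · have hSk : (#S : ℝ) ≤ k := by exact_mod_cast hS
    refine le_of_mul_le_mul_left ?_ hm₁
    calc ((m : ℝ) - 1) * |gramOffDiag Φ x S| ≤ ε * ((#S : ℝ) - 1) * ∑ i ∈ S, ‖x i‖ ^ 2 :=
          sub_one_mul_abs_gramOffDiag_le hunit hrip hm x hmS.le
      _ ≤ δ * ((m : ℝ) - 1) * ∑ i ∈ S, ‖x i‖ ^ 2 := by
          refine mul_le_mul_of_nonneg_right ((mul_le_mul_of_nonneg_left ?_ hε).trans hεδ) hx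
          linarith
      _ = ((m : ℝ) - 1) * (δ * ∑ i ∈ S, ‖x i‖ ^ 2) := by ring

theorem rip_of_order_le_one {Φ : Matrix ι κ ℂ} (hunit : ∀ j, ∑ a, ‖Φ a j‖ ^ 2 = 1) {k : ℕ} {δ : ℝ}
    (hk : k ≤ 1) (hδ : 0 ≤ δ) : RIP Φ k δ := by
  rw [rip_iff_abs_gramOffDiag_le hunit]
  intro x S hS
  have hS : S.offDiag = ∅ := by
    have : #S ≤ 1 := hS.trans hk
    rw [← card_eq_zero, offDiag_card]
    interval_cases #S <;> rfl
  simp only [gramOffDiag, hS, sum_empty, abs_zero]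
  positivity

lemma not_isLeast_rip_of_forall_eq_zero {Φ : Matrix ι κ ℂ} {m : ℕ}
    (h : ∀ x : κ → ℂ, #{i | x i ≠ 0} ≤ m → x = 0) (ε : ℝ) :
    ¬IsLeast {δ | RIP Φ m δ} ε := by
  intro hε
  have : RIP Φ m (ε - 1) := fun x hx => by simp [h x hx]
  linarith [hε.2 this]

lemma IsLeast.rip_nonneg {Φ : Matrix ι κ ℂ} {m : ℕ} {ε : ℝ} (hε : IsLeast {δ | RIP Φ m δ} ε) :
    0 ≤ ε := by
  by_contra hneg
  refine not_isLeast_rip_of_forall_eq_zero (fun x hx => ?_) ε hε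
  obtain ⟨hl, hr⟩ := hε.1 x hx
  have : ∑ i, ‖x i‖ ^ 2 = 0 := by
    have : 0 ≤ ∑ i, ‖x i‖ ^ 2 := by positivity
    nlinarith
  funext i
  simpa using (sum_eq_zero_iff_of_nonneg (fun i _ => by positivity)).1 this i (mem_univ i)

lemma IsLeast.one_le_rip_order {Φ : Matrix ι κ ℂ} {m : ℕ} {ε : ℝ}
    (hε : IsLeast {δ | RIP Φ m δ} ε) : 1 ≤ m := by
  by_contra! hm
  refine not_isLeast_rip_of_forall_eq_zero (fun x hx => ?_) ε hε
  funext i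
  by_contra hi
  have hi' : i ∈ ({i | x i ≠ 0} : Finset κ) := by simpa using hi
  exact (card_pos.2 ⟨i, hi'⟩).ne' (by omega)

theorem lazy_algorithm_correct_general {n N m k : ℕ} (Φ : Matrix (Fin n) (Fin N) ℂ)
    (hunit : ∀ j, ∑ a, ‖Φ a j‖ ^ 2 = 1)
    (ε δ : ℝ) (hε : IsLeast {δ' : ℝ | RIP Φ m δ'} ε)
    (hδ0 : 0 < δ)
    (hmk : m ≤ k) (hkb : (k : ℝ) ≤ 1 + ((m : ℝ) - 1) * δ / ε) :
    RIP Φ k δ := by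
  obtain rfl | hm := hε.one_le_rip_order.eq_or_lt
  · have hk : (k : ℝ) ≤ 1 := by simpa using hkb
    exact rip_of_order_le_one hunit (by exact_mod_cast hk) hδ0.le
  · refine rip_of_rip_of_two_le hunit hε.1 hm hmk hε.rip_nonneg ?_
    rcases hε.rip_nonneg.eq_or_lt with rfl | hpos
    · have : (1 : ℝ) ≤ m := by exact_mod_cast hm.le
      rw [zero_mul]
      exact mul_nonneg hδ0.le (by linarith)
    · calc ε * ((k : ℝ) - 1) ≤ ε * (((m : ℝ) - 1) * δ / ε) := by gcongr; linarith
        _ = δ * ((m : ℝ) - 1) := by field_simp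

/-- Correctness of the lazy algorithm: if ε is the least RIP parameter
of order m of a matrix Φ with unit columns, then for any δ ∈ (0,1) and any k with
m ≤ k ≤ 1 + (m-1)δ/ε, Φ satisfies the RIP of order k with parameter δ. -/
theorem lazy_algorithm_correct {n N m k : ℕ} (Φ : Matrix (Fin n) (Fin N) ℂ)
    (hunit : ∀ j, ∑ a, ‖Φ a j‖ ^ 2 = 1)
    (ε δ : ℝ) (hε : IsLeast {δ' : ℝ | RIP Φ m δ'} ε)
    (hδ0 : 0 < δ) (hδ1 : δ < 1)
    (hmk : m ≤ k) (hkb : (k : ℝ) ≤ 1 + ((m : ℝ) - 1) * δ / ε) :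
    RIP Φ k δ :=
  lazy_algorithm_correct_general Φ hunit ε δ hε hδ0 hmk hkb
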